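/- arXiv:2512.15079 — 5 statements merged into one kernel-verified Lean document; each statement's English description precedes it below -/
import Mathlib

section
/- Let f be a real-valued C^∞ function on an open set Ω ⊆ ℝ² whose Hessian matrix is positive definite at every point. Set E := f_xx, F := f_xy, G := f_yy. Then at every point of Ω the Brioschi curvature expression K := ( det [[−½E_yy + F_xy − ½G_xx, ½E_x, F_x − ½E_y], [F_y − ½G_x, E, F], [½G_y, F, G]] − det [[0, ½E_y, ½G_x], [½E_y, E, F], [½G_x, F, G]] ) / (EG − F²)² satisfies K = − det [[f_xx, f_xxx, f_xxy], [f_xy, f_xxy, f_xyy], [f_yy, f_xyy, f_yyy]] / ( 4·(f_xx·f_yy − f_xy·f_xy)² ). -/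
/-- Partial derivative in the `x`-direction. -/
noncomputable def px (f : ℝ × ℝ → ℝ) (p : ℝ × ℝ) : ℝ := fderiv ℝ f p (1, 0)

/-- Partial derivative in the `y`-direction. -/
noncomputable def py (f : ℝ × ℝ → ℝ) (p : ℝ × ℝ) : ℝ := fderiv ℝ f p (0, 1)

/-- The Brioschi expression for the Gaussian curvature of the metric
`E dx² + 2F dx dy + G dy²`. -/
noncomputable def brioschi (E F G : ℝ × ℝ → ℝ) (p : ℝ × ℝ) : ℝ :=
  (Matrix.det
      !![-(1/2) * py (py E) p + py (px F) p - (1/2) * px (px G) p,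
           (1/2) * px E p, px F p - (1/2) * py E p;
         py F p - (1/2) * px G p, E p, F p;
         (1/2) * py G p, F p, G p]
    - Matrix.det
      !![0, (1/2) * py E p, (1/2) * px G p;
         (1/2) * py E p, E p, F p;
         (1/2) * px G p, F p, G p])
    / (E p * G p - F p ^ 2) ^ 2

lemma smooth_px {Ω : Set (ℝ × ℝ)} (hΩ : IsOpen Ω) {f : ℝ × ℝ → ℝ}
    (hf : ContDiffOn ℝ (⊤ : ℕ∞) f Ω) : ContDiffOn ℝ (⊤ : ℕ∞) (px f) Ω := by
  have h := hf.fderiv_of_isOpen (m := (⊤ : ℕ∞)) hΩ (by simp)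
  exact h.clm_apply contDiffOn_const

lemma smooth_py {Ω : Set (ℝ × ℝ)} (hΩ : IsOpen Ω) {f : ℝ × ℝ → ℝ}
    (hf : ContDiffOn ℝ (⊤ : ℕ∞) f Ω) : ContDiffOn ℝ (⊤ : ℕ∞) (py f) Ω := by
  have h := hf.fderiv_of_isOpen (m := (⊤ : ℕ∞)) hΩ (by simp)
  exact h.clm_apply contDiffOn_const

lemma symm_lem {Ω : Set (ℝ × ℝ)} (hΩ : IsOpen Ω) {g : ℝ × ℝ → ℝ}
    (hg : ContDiffOn ℝ (⊤ : ℕ∞) g Ω) {p : ℝ × ℝ} (hp : p ∈ Ω) :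
    px (py g) p = py (px g) p := by
  have hca : ContDiffAt ℝ (⊤ : ℕ∞) g p := hg.contDiffAt (hΩ.mem_nhds hp)
  have hs : IsSymmSndFDerivAt ℝ g p := hca.isSymmSndFDerivAt (by norm_num; exact WithTop.coe_le_coe.mpr le_top)
  have hdiff : DifferentiableAt ℝ (fderiv ℝ g) p := by
    have := (hca.fderiv_right (m := (⊤ : ℕ∞)) le_rfl)
    exact this.differentiableAt (by simp)
  have h1 : px (py g) p = fderiv ℝ (fderiv ℝ g) p (1,0) (0,1) := by
    unfold px py
    rw [fderiv_clm_apply hdiff (differentiableAt_const _)]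
    simp
  have h2 : py (px g) p = fderiv ℝ (fderiv ℝ g) p (0,1) (1,0) := by
    unfold px py
    rw [fderiv_clm_apply hdiff (differentiableAt_const _)]
    simp
  rw [h1, h2, hs (1,0) (0,1)]

lemma px_congr {g₁ g₂ : ℝ × ℝ → ℝ} {p : ℝ × ℝ} (h : g₁ =ᶠ[nhds p] g₂) :
    px g₁ p = px g₂ p := by unfold px; rw [h.fderiv_eq]

lemma py_congr {g₁ g₂ : ℝ × ℝ → ℝ} {p : ℝ × ℝ} (h : g₁ =ᶠ[nhds p] g₂) :
    py g₁ p = py g₂ p := by unfold py; rw [h.fderiv_eq]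

theorem brioschi_of_hessian_metric (Ω : Set (ℝ × ℝ)) (hΩ : IsOpen Ω)
    (f : ℝ × ℝ → ℝ) (hf : ContDiffOn ℝ (⊤ : ℕ∞) f Ω)
    (hpos : ∀ p ∈ Ω,
      Matrix.PosDef !![px (px f) p, py (px f) p; py (px f) p, py (py f) p]) :
    ∀ p ∈ Ω,
      brioschi (px (px f)) (py (px f)) (py (py f)) p
      = - Matrix.det
            !![px (px f) p, px (px (px f)) p, py (px (px f)) p;
               py (px f) p, py (px (px f)) p, py (py (px f)) p;
               py (py f) p, py (py (px f)) p, py (py (py f)) p]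
          / (4 * (px (px f) p * py (py f) p - py (px f) p * py (px f) p) ^ 2) := by
  intro p hp
  have hfx : ContDiffOn ℝ (⊤ : ℕ∞) (px f) Ω := smooth_px hΩ hf
  have hfy : ContDiffOn ℝ (⊤ : ℕ∞) (py f) Ω := smooth_py hΩ hf
  have hfxy : ContDiffOn ℝ (⊤ : ℕ∞) (py (px f)) Ω := smooth_py hΩ hfx
  -- pointwise function equalities on Ω
  have e1 : ∀ q ∈ Ω, px (py (px f)) q = py (px (px f)) q :=
    fun q hq => symm_lem hΩ hfx hq
  have e0 : ∀ q ∈ Ω, px (py f) q = py (px f) q := fun q hq => symm_lem hΩ hf hq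
  have e2 : ∀ q ∈ Ω, px (py (py f)) q = py (py (px f)) q := by
    intro q hq
    rw [symm_lem hΩ hfy hq]
    exact py_congr (Filter.eventuallyEq_of_mem (hΩ.mem_nhds hq) e0)
  have mem := hΩ.mem_nhds hp
  -- first-order rewrites at p
  have hb : px (py (px f)) p = py (px (px f)) p := e1 p hp
  have hc : px (py (py f)) p = py (py (px f)) p := e2 p hp
  -- second-order rewrites at p
  have hT1 : py (px (py (px f))) p = py (py (px (px f))) p :=
    py_congr (Filter.eventuallyEq_of_mem mem e1)
  have hT2 : px (px (py (py f))) p = py (py (px (px f))) p := by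
    have : px (px (py (py f))) p = px (py (py (px f))) p :=
      px_congr (Filter.eventuallyEq_of_mem mem e2)
    rw [this, symm_lem hΩ hfxy hp, hT1]
  -- denominator positive
  have hD : 0 < px (px f) p * py (py f) p - py (px f) p * py (px f) p := by
    have := (hpos p hp).det_pos
    rwa [Matrix.det_fin_two_of] at this
  have hD' : px (px f) p * py (py f) p - py (px f) p * py (px f) p ≠ 0 := ne_of_gt hD
  simp [brioschi, Matrix.det_fin_three]
  rw [hb, hc, hT1, hT2]
  have h1 : (px (px f) p * py (py f) p - py (px f) p ^ 2) ^ 2 ≠ 0 :=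
    pow_ne_zero _ (by rw [sq]; exact hD')
  have h2 : 4 * (px (px f) p * py (py f) p - py (px f) p * py (px f) p) ^ 2 ≠ 0 := by
    positivity
  rw [div_eq_div_iff h1 h2]
  ring
end

section
/- Let f be a real-valued C^∞ function on an open set Ω ⊆ ℝ² and let P : ℝ³ ∖ {0} → ℝ be a C^∞ function that is positively homogeneous of degree zero (P(λw) = P(w) for all λ > 0, w ≠ 0). Suppose that at every point of Ω the vector (f_xx, f_xy, f_yy) is nonzero and P(f_xx, f_xy, f_yy) = 0. Then at every point of Ω where the gradient of P at (f_xx, f_xy, f_yy) is nonzero, one has det [[f_xx, f_xxx, f_xxy], [f_xy, f_xxy, f_xyy], [f_yy, f_xyy, f_yyy]] = 0. -/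
open scoped ContDiff

lemma pd_contDiffOn {Ω : Set (ℝ × ℝ)} (hΩ : IsOpen Ω) {g : ℝ × ℝ → ℝ}
    (hg : ContDiffOn ℝ ∞ g Ω) (v : ℝ × ℝ) :
    ContDiffOn ℝ ∞ (fun q => fderiv ℝ g q v) Ω :=
  (ContinuousLinearMap.apply ℝ ℝ v).contDiff.comp_contDiffOn
    ((contDiffOn_infty_iff_fderiv_of_isOpen hΩ).1 hg).2

lemma pd_symm {Ω : Set (ℝ × ℝ)} (hΩ : IsOpen Ω) {g : ℝ × ℝ → ℝ}
    (hg : ContDiffOn ℝ ∞ g Ω) {p : ℝ × ℝ} (hp : p ∈ Ω) (u v : ℝ × ℝ) :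
    fderiv ℝ (fun q => fderiv ℝ g q v) p u = fderiv ℝ (fun q => fderiv ℝ g q u) p v := by
  have hga : ContDiffAt ℝ ∞ g p := hg.contDiffAt (hΩ.mem_nhds hp)
  have hd2 : DifferentiableAt ℝ (fderiv ℝ g) p :=
    (hga.fderiv_right (m := ∞) (by simp)).differentiableAt (by simp)
  have key : ∀ u' : ℝ × ℝ, fderiv ℝ (fun q => fderiv ℝ g q u') p =
      (fderiv ℝ (fderiv ℝ g) p).flip u' := by
    intro u'
    rw [fderiv_clm_apply hd2 (differentiableAt_const u')]
    simp
  rw [key v, key u]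
  simp only [ContinuousLinearMap.flip_apply]
  exact hga.isSymmSndFDerivAt (by simp [minSmoothness_of_isRCLikeNormedField]; exact WithTop.coe_le_coe.2 le_top) u v

lemma euler_rel {P : (Fin 3 → ℝ) → ℝ}
    (hP : ContDiffOn ℝ ∞ P {w : Fin 3 → ℝ | w ≠ 0})
    (hhom : ∀ l : ℝ, 0 < l → ∀ w : Fin 3 → ℝ, w ≠ 0 → P (l • w) = P w)
    {w : Fin 3 → ℝ} (hw : w ≠ 0) : fderiv ℝ P w w = 0 := by
  have hop : IsOpen {w : Fin 3 → ℝ | w ≠ 0} := isOpen_ne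
  have hPd : DifferentiableAt ℝ P w :=
    (hP.contDiffAt (hop.mem_nhds hw)).differentiableAt (by simp)
  have hs : HasDerivAt (fun t : ℝ => t • w) w 1 := by
    simpa using (hasDerivAt_id (1 : ℝ)).smul_const w
  have hPd' : HasFDerivAt P (fderiv ℝ P w) ((1 : ℝ) • w) := by
    rw [one_smul]; exact hPd.hasFDerivAt
  have h1 : HasDerivAt (fun t : ℝ => P (t • w)) (fderiv ℝ P w w) 1 :=
    hPd'.comp_hasDerivAt 1 hs
  have heq : (fun t : ℝ => P (t • w)) =ᶠ[nhds (1 : ℝ)] fun _ => P w := by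
    filter_upwards [Ioi_mem_nhds (by norm_num : (0 : ℝ) < 1)] with t ht
    exact hhom t ht w hw
  have h2 : HasDerivAt (fun t : ℝ => P (t • w)) 0 1 :=
    (hasDerivAt_const (1 : ℝ) (P w)).congr_of_eventuallyEq heq
  exact h1.unique h2

theorem det_eq_zero_of_homogeneous_relation (Ω : Set (ℝ × ℝ)) (hΩ : IsOpen Ω)
    (f : ℝ × ℝ → ℝ) (hf : ContDiffOn ℝ (⊤ : ℕ∞) f Ω)
    (P : (Fin 3 → ℝ) → ℝ)
    (hP : ContDiffOn ℝ (⊤ : ℕ∞) P {w : Fin 3 → ℝ | w ≠ 0})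
    (hhom : ∀ l : ℝ, 0 < l → ∀ w : Fin 3 → ℝ, w ≠ 0 → P (l • w) = P w)
    (hne : ∀ p ∈ Ω, (![px (px f) p, py (px f) p, py (py f) p] : Fin 3 → ℝ) ≠ 0)
    (hrel : ∀ p ∈ Ω, P ![px (px f) p, py (px f) p, py (py f) p] = 0) :
    ∀ p ∈ Ω, fderiv ℝ P ![px (px f) p, py (px f) p, py (py f) p] ≠ 0 →
      Matrix.det
        !![px (px f) p, px (px (px f)) p, py (px (px f)) p;
           py (px f) p, py (px (px f)) p, py (py (px f)) p;
           py (py f) p, py (py (px f)) p, py (py (py f)) p] = 0 := by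
  intro p hp hL
  have hf' : ContDiffOn ℝ ∞ f Ω := hf.of_le (by simp)
  have hP' : ContDiffOn ℝ ∞ P {w : Fin 3 → ℝ | w ≠ 0} := hP.of_le (by simp)
  have hfx : ContDiffOn ℝ ∞ (px f) Ω := pd_contDiffOn hΩ hf' (1, 0)
  have hfy : ContDiffOn ℝ ∞ (py f) Ω := pd_contDiffOn hΩ hf' (0, 1)
  have hA : ContDiffOn ℝ ∞ (px (px f)) Ω := pd_contDiffOn hΩ hfx (1, 0)
  have hB : ContDiffOn ℝ ∞ (py (px f)) Ω := pd_contDiffOn hΩ hfx (0, 1)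
  have hC : ContDiffOn ℝ ∞ (py (py f)) Ω := pd_contDiffOn hΩ hfy (0, 1)
  have hAd : DifferentiableAt ℝ (px (px f)) p :=
    (hA.contDiffAt (hΩ.mem_nhds hp)).differentiableAt (by simp)
  have hBd : DifferentiableAt ℝ (py (px f)) p :=
    (hB.contDiffAt (hΩ.mem_nhds hp)).differentiableAt (by simp)
  have hCd : DifferentiableAt ℝ (py (py f)) p :=
    (hC.contDiffAt (hΩ.mem_nhds hp)).differentiableAt (by simp)
  set w : Fin 3 → ℝ := ![px (px f) p, py (px f) p, py (py f) p] with hwdef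
  set L : (Fin 3 → ℝ) →L[ℝ] ℝ := fderiv ℝ P w with hLdef
  set W : ℝ × ℝ → (Fin 3 → ℝ) := fun q => ![px (px f) q, py (px f) q, py (py f) q]
    with hWdef
  set DA := fderiv ℝ (px (px f)) p with hDA
  set DB := fderiv ℝ (py (px f)) p with hDB
  set DC := fderiv ℝ (py (py f)) p with hDC
  set W' : (ℝ × ℝ) →L[ℝ] (Fin 3 → ℝ) := ContinuousLinearMap.pi ![DA, DB, DC] with hW'
  have hW : HasFDerivAt W W' p := by
    apply hasFDerivAt_pi''
    intro i
    fin_cases i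
    · simpa [W, W', ContinuousLinearMap.proj_pi] using hAd.hasFDerivAt
    · simpa [W, W', ContinuousLinearMap.proj_pi] using hBd.hasFDerivAt
    · simpa [W, W', ContinuousLinearMap.proj_pi] using hCd.hasFDerivAt
  have hdW : ∀ u : ℝ × ℝ, W' u = ![DA u, DB u, DC u] := by
    intro u; funext i; fin_cases i <;> simp [W', ContinuousLinearMap.pi_apply]
  have hwne : w ≠ 0 := hne p hp
  have hPd : DifferentiableAt ℝ P w :=
    (hP'.contDiffAt ((isOpen_ne).mem_nhds hwne)).differentiableAt (by simp)
  have hcomp : HasFDerivAt (fun q => P (W q)) (L.comp W') p :=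
    hPd.hasFDerivAt.comp p hW
  have hzero : (fun q => P (W q)) =ᶠ[nhds p] fun _ => 0 := by
    filter_upwards [hΩ.mem_nhds hp] with q hq
    exact hrel q hq
  have h0' : HasFDerivAt (fun q => P (W q)) 0 p :=
    (hasFDerivAt_const (𝕜 := ℝ) (0 : ℝ) p).congr_of_eventuallyEq hzero
  have hLW' : L.comp W' = 0 := hcomp.unique h0'
  have happ : ∀ u : ℝ × ℝ, L ![DA u, DB u, DC u] = 0 := by
    intro u
    have := ContinuousLinearMap.ext_iff.1 hLW' u
    rwa [ContinuousLinearMap.comp_apply, hdW u] at this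
  -- the two directional derivative relations
  have hx : L ![px (px (px f)) p, px (py (px f)) p, px (py (py f)) p] = 0 := happ (1, 0)
  have hy : L ![py (px (px f)) p, py (py (px f)) p, py (py (py f)) p] = 0 := happ (0, 1)
  -- symmetry of mixed partials
  have s1 : px (py (px f)) p = py (px (px f)) p := pd_symm hΩ hfx hp (1, 0) (0, 1)
  have s2 : px (py (py f)) p = py (py (px f)) p := by
    have e1 : px (py (py f)) p = py (px (py f)) p := pd_symm hΩ hfy hp (1, 0) (0, 1)
    have e2 : px (py f) =ᶠ[nhds p] py (px f) := by
      filter_upwards [hΩ.mem_nhds hp] with q hq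
      exact pd_symm hΩ hf' hq (1, 0) (0, 1)
    have e3 : py (px (py f)) p = py (py (px f)) p := by
      show fderiv ℝ (px (py f)) p (0, 1) = fderiv ℝ (py (px f)) p (0, 1)
      rw [e2.fderiv_eq]
    rw [e1, e3]
  rw [s1, s2] at hx
  have h0 : L w = 0 := euler_rel hP' hhom hwne
  -- final linear algebra
  by_contra hdet
  set M : Matrix (Fin 3) (Fin 3) ℝ :=
    !![px (px f) p, px (px (px f)) p, py (px (px f)) p;
       py (px f) p, py (px (px f)) p, py (py (px f)) p;
       py (py f) p, py (py (px f)) p, py (py (py f)) p] with hM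
  have hMu : IsUnit M.det := isUnit_iff_ne_zero.2 hdet
  have hLzero : L = 0 := by
    apply ContinuousLinearMap.ext
    intro v
    have hv : M.mulVec (M⁻¹.mulVec v) = v := by
      rw [Matrix.mulVec_mulVec, Matrix.mul_nonsing_inv _ hMu, Matrix.one_mulVec]
    set c := M⁻¹.mulVec v with hc
    have hexp : v = c 0 • (fun i => M i 0) + c 1 • (fun i => M i 1) + c 2 • (fun i => M i 2) := by
      funext i
      conv_lhs => rw [← hv]
      simp [Matrix.mulVec, dotProduct, Fin.sum_univ_three, mul_comm]
    have e0 : (fun i => M i 0) = w := by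
      funext i; fin_cases i <;> simp [M, w]
    have e1 : (fun i => M i 1) =
        ![px (px (px f)) p, py (px (px f)) p, py (py (px f)) p] := by
      funext i; fin_cases i <;> simp [M]
    have e2 : (fun i => M i 2) =
        ![py (px (px f)) p, py (py (px f)) p, py (py (py f)) p] := by
      funext i; fin_cases i <;> simp [M]
    rw [hexp, map_add, map_add, map_smul, map_smul, map_smul, e0, e1, e2, h0, hx, hy]
    simp
  exact hL hLzero
end

section
/- Let u, p, a be real numbers with 0 < p < 1 and u² < p·(1−p), and set D := a·u − p. Then a² − 4·D·(1+D) > 0. Consequently, whenever D ≠ 0, the quadratic equation D·λ² − a·λ + (1+D) = 0 has two distinct real roots λ₁ = (a − √(a² − 4D(1+D)))/(2D) and λ₂ = (a + √(a² − 4D(1+D)))/(2D). -/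
theorem discriminant_pos_and_roots (u p a : ℝ)
    (hp0 : 0 < p) (hp1 : p < 1) (hu : u ^ 2 < p * (1 - p)) :
    0 < a ^ 2 - 4 * (a * u - p) * (1 + (a * u - p))
    ∧ (a * u - p ≠ 0 →
        ((a - Real.sqrt (a ^ 2 - 4 * (a * u - p) * (1 + (a * u - p)))) / (2 * (a * u - p))
          ≠ (a + Real.sqrt (a ^ 2 - 4 * (a * u - p) * (1 + (a * u - p)))) / (2 * (a * u - p)))
        ∧ (a * u - p) * ((a - Real.sqrt (a ^ 2 - 4 * (a * u - p) * (1 + (a * u - p))))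
              / (2 * (a * u - p))) ^ 2
            - a * ((a - Real.sqrt (a ^ 2 - 4 * (a * u - p) * (1 + (a * u - p))))
              / (2 * (a * u - p)))
            + (1 + (a * u - p)) = 0
        ∧ (a * u - p) * ((a + Real.sqrt (a ^ 2 - 4 * (a * u - p) * (1 + (a * u - p))))
              / (2 * (a * u - p))) ^ 2
            - a * ((a + Real.sqrt (a ^ 2 - 4 * (a * u - p) * (1 + (a * u - p))))
              / (2 * (a * u - p)))
            + (1 + (a * u - p)) = 0) := by
  have hu4 : u ^ 2 < 1 / 4 := by nlinarith [sq_nonneg (2 * p - 1)]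
  have hΔ : 0 < a ^ 2 - 4 * (a * u - p) * (1 + (a * u - p)) := by
    nlinarith [sq_nonneg ((1 - 4 * u ^ 2) * a + 2 * u * (2 * p - 1)),
      sq_nonneg (2 * p - 1), sq_nonneg u, sq_nonneg a]
  refine ⟨hΔ, fun hD => ?_⟩
  set Δ := a ^ 2 - 4 * (a * u - p) * (1 + (a * u - p)) with hΔdef
  have hs : Real.sqrt Δ ^ 2 = Δ := Real.sq_sqrt hΔ.le
  have hspos : 0 < Real.sqrt Δ := Real.sqrt_pos.mpr hΔ
  refine ⟨?_, ?_, ?_⟩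
  · intro h
    have h2 : (2 : ℝ) * (a * u - p) ≠ 0 := by simpa using hD
    field_simp at h
    have : Real.sqrt Δ = 0 := by linarith
    linarith
  · field_simp
    nlinarith [hs]
  · field_simp
    nlinarith [hs]
end

section
/- Let C ⊆ ℝ² ∖ {(0,0)} be an open cone, d a real number, and f : C → ℝ a C^∞ function that is positively homogeneous of degree d (f(λx,λy) = λ^d f(x,y) for all λ > 0). Then at every point of C one has det [[f_xx, f_xxx, f_xxy], [f_xy, f_xxy, f_xyy], [f_yy, f_xyy, f_yyy]] = 0. Consequently, if the Hessian matrix of f is moreover positive definite at every point, the Hessian metric g := f_xx dx² + 2 f_xy dx dy + f_yy dy² is flat. -/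
open Filter

variable {C : Set (ℝ × ℝ)}

lemma pd_contDiffOn_s13 (hC : IsOpen C) {f : ℝ × ℝ → ℝ} (hf : ContDiffOn ℝ (⊤ : ℕ∞) f C) (v : ℝ × ℝ) :
    ContDiffOn ℝ (⊤ : ℕ∞) (fun p => fderiv ℝ f p v) C :=
  (hf.fderiv_of_isOpen hC (by simp)).clm_apply contDiffOn_const

lemma diffAt {F : Type*} [NormedAddCommGroup F] [NormedSpace ℝ F]
    (hC : IsOpen C) {f : ℝ × ℝ → F} (hf : ContDiffOn ℝ (⊤ : ℕ∞) f C) {p : ℝ × ℝ}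
    (hp : p ∈ C) : DifferentiableAt ℝ f p :=
  (hf.contDiffAt (hC.mem_nhds hp)).differentiableAt (by simp)

lemma pd_congr (hC : IsOpen C) {g1 g2 : ℝ × ℝ → ℝ} (h : ∀ q ∈ C, g1 q = g2 q)
    {p : ℝ × ℝ} (hp : p ∈ C) (v : ℝ × ℝ) : fderiv ℝ g1 p v = fderiv ℝ g2 p v := by
  have h' : g1 =ᶠ[nhds p] g2 := by
    filter_upwards [hC.mem_nhds hp] with q hq using h q hq
  rw [h'.fderiv_eq]

lemma sym (hC : IsOpen C) {g : ℝ × ℝ → ℝ} (hg : ContDiffOn ℝ (⊤ : ℕ∞) g C) {p : ℝ × ℝ}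
    (hp : p ∈ C) (v w : ℝ × ℝ) :
    fderiv ℝ (fun q => fderiv ℝ g q w) p v = fderiv ℝ (fun q => fderiv ℝ g q v) p w := by
  have hF : ContDiffOn ℝ (⊤ : ℕ∞) (fderiv ℝ g) C := hg.fderiv_of_isOpen hC (by simp)
  have hFd : DifferentiableAt ℝ (fderiv ℝ g) p := diffAt hC hF hp
  have hev : ∀ᶠ y in nhds p, HasFDerivAt g (fderiv ℝ g y) y := by
    filter_upwards [hC.mem_nhds hp] with y hy using (diffAt hC hg hy).hasFDerivAt
  have hsym := second_derivative_symmetric_of_eventually hev hFd.hasFDerivAt v w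
  rw [fderiv_clm_apply hFd (differentiableAt_const w),
      fderiv_clm_apply hFd (differentiableAt_const v)]
  simpa using hsym

lemma euler (hC : IsOpen C) {g : ℝ × ℝ → ℝ} {e : ℝ}
    (hg : ∀ q ∈ C, DifferentiableAt ℝ g q)
    (hhom : ∀ q ∈ C, ∀ l : ℝ, 0 < l → g (l • q) = l ^ e * g q)
    {p : ℝ × ℝ} (hp : p ∈ C) :
    p.1 * fderiv ℝ g p (1, 0) + p.2 * fderiv ℝ g p (0, 1) = e * g p := by
  have hgp := hg p hp
  -- derivative of l ↦ g (l • p) at 1 is (fderiv g p) p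
  have h1 : HasDerivAt (fun l : ℝ => l • p) p 1 := by
    simpa using (hasDerivAt_id (1 : ℝ)).smul_const p
  have hD : HasDerivAt (fun l : ℝ => g (l • p)) (fderiv ℝ g p p) 1 := by
    have hg' : HasFDerivAt g (fderiv ℝ g p) ((fun l : ℝ => l • p) 1) := by
      simpa using hgp.hasFDerivAt
    exact hg'.comp_hasDerivAt 1 h1
  -- the two functions agree near 1
  have hev : (fun l : ℝ => g (l • p)) =ᶠ[nhds (1 : ℝ)] fun l : ℝ => l ^ e * g p := by
    have hU : IsOpen {l : ℝ | 0 < l ∧ l • p ∈ C} := by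
      have : Continuous fun l : ℝ => l • p := by fun_prop
      exact (isOpen_Ioi.inter (hC.preimage this))
    have hmem : {l : ℝ | 0 < l ∧ l • p ∈ C} ∈ nhds (1 : ℝ) := by
      refine hU.mem_nhds ⟨one_pos, by simpa using hp⟩
    filter_upwards [hmem] with l hl using hhom p hp l hl.1
  have hD2 : HasDerivAt (fun l : ℝ => l ^ e * g p) (fderiv ℝ g p p) 1 :=
    hD.congr_of_eventuallyEq hev.symm
  have hD3 : HasDerivAt (fun l : ℝ => l ^ e * g p) (e * g p) 1 := by
    have := (Real.hasDerivAt_rpow_const (x := (1:ℝ)) (p := e) (Or.inl one_ne_zero)).mul_const (g p)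
    simpa using this
  have key : fderiv ℝ g p p = e * g p := hD2.unique hD3
  have hps : p = p.1 • ((1 : ℝ), (0 : ℝ)) + p.2 • ((0 : ℝ), (1 : ℝ)) := by
    simp [Prod.ext_iff]
  rw [← key]
  conv_rhs => rw [hps]
  rw [map_add, map_smul, map_smul]
  simp [smul_eq_mul]

lemma hom_fderiv (hC : IsOpen C) (hcone : ∀ p ∈ C, ∀ l : ℝ, 0 < l → l • p ∈ C)
    {g : ℝ × ℝ → ℝ} {e : ℝ} (hg : ∀ q ∈ C, DifferentiableAt ℝ g q)
    (hhom : ∀ q ∈ C, ∀ l : ℝ, 0 < l → g (l • q) = l ^ e * g q) (v : ℝ × ℝ) :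
    ∀ p ∈ C, ∀ l : ℝ, 0 < l →
      fderiv ℝ g (l • p) v = l ^ (e - 1) * fderiv ℝ g p v := by
  intro p hp l hl
  have hA : HasFDerivAt (fun q : ℝ × ℝ => g (l • q))
      ((fderiv ℝ g (l • p)).comp (l • ContinuousLinearMap.id ℝ (ℝ × ℝ))) p := by
    have hclm : HasFDerivAt (fun q : ℝ × ℝ => l • q)
        (l • ContinuousLinearMap.id ℝ (ℝ × ℝ)) p := by
      exact (l • ContinuousLinearMap.id ℝ (ℝ × ℝ)).hasFDerivAt (x := p)
    exact (hg _ (hcone p hp l hl)).hasFDerivAt.comp p hclm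
  have hB : HasFDerivAt (fun q : ℝ × ℝ => l ^ e * g q) ((l ^ e) • fderiv ℝ g p) p :=
    (hg p hp).hasFDerivAt.const_mul (l ^ e)
  have hev : (fun q : ℝ × ℝ => g (l • q)) =ᶠ[nhds p] fun q : ℝ × ℝ => l ^ e * g q := by
    filter_upwards [hC.mem_nhds hp] with q hq using hhom q hq l hl
  have hA' : HasFDerivAt (fun q : ℝ × ℝ => l ^ e * g q)
      ((fderiv ℝ g (l • p)).comp (l • ContinuousLinearMap.id ℝ (ℝ × ℝ))) p :=
    hA.congr_of_eventuallyEq hev.symm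
  have key := hA'.unique hB
  have h2 : l * fderiv ℝ g (l • p) v = l ^ e * fderiv ℝ g p v := by
    have := congrArg (fun T : (ℝ × ℝ) →L[ℝ] ℝ => T v) key
    simpa [mul_comm, smul_eq_mul] using this
  have hle : l ^ (e - 1) = l ^ e / l := by
    rw [Real.rpow_sub hl, Real.rpow_one]
  rw [hle]
  field_simp
  linarith [h2]

lemma det_aux (x y d2 E F G a b c e : ℝ) (hp : x ≠ 0 ∨ y ≠ 0)
    (h1 : x * a + y * b = d2 * E) (h2 : x * b + y * c = d2 * F)
    (h3 : x * c + y * e = d2 * G) :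
    E * b * e - E * c * c - a * F * e + a * c * G + b * F * c - b * b * G = 0 := by
  rcases hp with hx | hy
  · have key : x * (E * b * e - E * c * c - a * F * e + a * c * G + b * F * c - b * b * G) = 0 := by
      linear_combination (-(F * e - c * G)) * h1 + (E * e - b * G) * h2 + (-(E * c - b * F)) * h3
    rcases mul_eq_zero.mp key with h | h
    · exact absurd h hx
    · exact h
  · have key : y * (E * b * e - E * c * c - a * F * e + a * c * G + b * F * c - b * b * G) = 0 := by
      linear_combination (F * c - b * G) * h1 + (-(E * c - a * G)) * h2 + (E * b - a * F) * h3
    rcases mul_eq_zero.mp key with h | h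
    · exact absurd h hy
    · exact h

theorem homogeneous_potential_is_flat (C : Set (ℝ × ℝ)) (hC : IsOpen C)
    (hC0 : ∀ p ∈ C, p ≠ (0, 0)) (hcone : ∀ p ∈ C, ∀ l : ℝ, 0 < l → l • p ∈ C)
    (d : ℝ) (f : ℝ × ℝ → ℝ) (hf : ContDiffOn ℝ (⊤ : ℕ∞) f C)
    (hhom : ∀ p ∈ C, ∀ l : ℝ, 0 < l → f (l • p) = l ^ d * f p) :
    (∀ p ∈ C,
      Matrix.det
        !![px (px f) p, px (px (px f)) p, py (px (px f)) p;
           py (px f) p, py (px (px f)) p, py (py (px f)) p;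
           py (py f) p, py (py (px f)) p, py (py (py f)) p] = 0)
    ∧ ((∀ p ∈ C,
          Matrix.PosDef !![px (px f) p, py (px f) p; py (px f) p, py (py f) p]) →
        ∀ p ∈ C, brioschi (px (px f)) (py (px f)) (py (py f)) p = 0) := by
  have hfx : ContDiffOn ℝ (⊤ : ℕ∞) (px f) C := pd_contDiffOn_s13 hC hf (1, 0)
  have hfy : ContDiffOn ℝ (⊤ : ℕ∞) (py f) C := pd_contDiffOn_s13 hC hf (0, 1)
  have hfxx : ContDiffOn ℝ (⊤ : ℕ∞) (px (px f)) C := pd_contDiffOn_s13 hC hfx (1, 0)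
  have hfxy : ContDiffOn ℝ (⊤ : ℕ∞) (py (px f)) C := pd_contDiffOn_s13 hC hfx (0, 1)
  have hfyy : ContDiffOn ℝ (⊤ : ℕ∞) (py (py f)) C := pd_contDiffOn_s13 hC hfy (0, 1)
  have homx : ∀ q ∈ C, ∀ l : ℝ, 0 < l → px f (l • q) = l ^ (d - 1) * px f q :=
    fun q hq l hl => hom_fderiv hC hcone (fun r hr => diffAt hC hf hr) hhom (1, 0) q hq l hl
  have homy : ∀ q ∈ C, ∀ l : ℝ, 0 < l → py f (l • q) = l ^ (d - 1) * py f q :=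
    fun q hq l hl => hom_fderiv hC hcone (fun r hr => diffAt hC hf hr) hhom (0, 1) q hq l hl
  have homxx : ∀ q ∈ C, ∀ l : ℝ, 0 < l → px (px f) (l • q) = l ^ (d - 1 - 1) * px (px f) q :=
    fun q hq l hl => hom_fderiv hC hcone (fun r hr => diffAt hC hfx hr) homx (1, 0) q hq l hl
  have homxy : ∀ q ∈ C, ∀ l : ℝ, 0 < l → py (px f) (l • q) = l ^ (d - 1 - 1) * py (px f) q :=
    fun q hq l hl => hom_fderiv hC hcone (fun r hr => diffAt hC hfx hr) homx (0, 1) q hq l hl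
  have homyy : ∀ q ∈ C, ∀ l : ℝ, 0 < l → py (py f) (l • q) = l ^ (d - 1 - 1) * py (py f) q :=
    fun q hq l hl => hom_fderiv hC hcone (fun r hr => diffAt hC hfy hr) homy (0, 1) q hq l hl
  have S0 : ∀ q ∈ C, px (py f) q = py (px f) q := fun q hq => sym hC hf hq (1, 0) (0, 1)
  have S1 : ∀ q ∈ C, px (py (px f)) q = py (px (px f)) q :=
    fun q hq => sym hC hfx hq (1, 0) (0, 1)
  have S2 : ∀ q ∈ C, px (py (py f)) q = py (py (px f)) q := by
    intro q hq
    have a1 : px (py (py f)) q = py (px (py f)) q := sym hC hfy hq (1, 0) (0, 1)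
    have a2 : py (px (py f)) q = py (py (px f)) q := pd_congr hC S0 hq (0, 1)
    exact a1.trans a2
  have part1 : ∀ p ∈ C,
      Matrix.det
        !![px (px f) p, px (px (px f)) p, py (px (px f)) p;
           py (px f) p, py (px (px f)) p, py (py (px f)) p;
           py (py f) p, py (py (px f)) p, py (py (py f)) p] = 0 := by
    intro p hp
    have hE1 : p.1 * px (px (px f)) p + p.2 * py (px (px f)) p = (d - 1 - 1) * px (px f) p :=
      euler hC (fun r hr => diffAt hC hfxx hr) homxx hp
    have hE2 : p.1 * px (py (px f)) p + p.2 * py (py (px f)) p = (d - 1 - 1) * py (px f) p :=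
      euler hC (fun r hr => diffAt hC hfxy hr) homxy hp
    rw [S1 p hp] at hE2
    have hE3 : p.1 * px (py (py f)) p + p.2 * py (py (py f)) p = (d - 1 - 1) * py (py f) p :=
      euler hC (fun r hr => diffAt hC hfyy hr) homyy hp
    rw [S2 p hp] at hE3
    have hxy : p.1 ≠ 0 ∨ p.2 ≠ 0 := by
      by_contra h
      push_neg at h
      exact hC0 p hp (Prod.ext h.1 h.2)
    have hkey := det_aux p.1 p.2 (d - 1 - 1) (px (px f) p) (py (px f) p) (py (py f) p)
      (px (px (px f)) p) (py (px (px f)) p) (py (py (px f)) p) (py (py (py f)) p)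
      hxy hE1 hE2 hE3
    simp [Matrix.det_fin_three]
    linear_combination hkey
  refine ⟨part1, fun _ p hp => ?_⟩
  have hdet := part1 p hp
  simp [Matrix.det_fin_three] at hdet
  have s1 := S1 p hp
  have s2 := S2 p hp
  have s3 : py (px (py (px f))) p = py (py (px (px f))) p := pd_congr hC S1 hp (0, 1)
  have s4 : px (px (py (py f))) p = py (py (px (px f))) p := by
    have a1 : px (px (py (py f))) p = px (py (py (px f))) p := pd_congr hC S2 hp (1, 0)
    have a2 : px (py (py (px f))) p = py (px (py (px f))) p := sym hC hfxy hp (1, 0) (0, 1)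
    exact a1.trans (a2.trans s3)
  unfold brioschi
  rw [div_eq_zero_iff]
  left
  simp only [Matrix.det_fin_three]
  simp only [Matrix.cons_val', Matrix.cons_val_zero, Matrix.cons_val_one, Matrix.head_cons,
    Matrix.empty_val', Matrix.cons_val_fin_one, Matrix.head_fin_const, Matrix.of_apply,
    Matrix.cons_val_two, Matrix.tail_cons]
  rw [s3, s4, s1, s2]
  linear_combination (-(1 / 4 : ℝ)) * hdet
end

section
/- Let Ω := {(x,y) ∈ ℝ² : x² + y² < 1} be the open unit disk and let f : Ω → ℝ be a C^∞ function whose Hessian matrix is positive definite at every point. Suppose f is radially symmetric, i.e., there exists a C^∞ function h : [0,1) → ℝ with f(x,y) = h(x² + y²) for all (x,y) ∈ Ω, and suppose det [[f_xx, f_xxx, f_xxy], [f_xy, f_xxy, f_xyy], [f_yy, f_xyy, f_yyy]] = 0 at every point of Ω (so the Hessian metric of f is flat). Then there exist real numbers C > 0 and c such that f(x,y) = C·(x² + y²) + c for all (x,y) ∈ Ω. -/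
open Set


/-- radius-squared function -/
noncomputable def rs (p : ℝ × ℝ) : ℝ := p.1 ^ 2 + p.2 ^ 2

noncomputable def rsL (p : ℝ × ℝ) : ℝ × ℝ →L[ℝ] ℝ :=
  (2 * p.1) • ContinuousLinearMap.fst ℝ ℝ ℝ + (2 * p.2) • ContinuousLinearMap.snd ℝ ℝ ℝ

lemma hasFDerivAt_rs (p : ℝ × ℝ) : HasFDerivAt rs (rsL p) p := by
  have h1 : HasFDerivAt (fun q : ℝ × ℝ => q.1 * q.1 + q.2 * q.2)
      (rsL p) p := by
    have := ((hasFDerivAt_fst (𝕜 := ℝ) (p := p)).mul (hasFDerivAt_fst (𝕜 := ℝ) (p := p))).add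
      ((hasFDerivAt_snd (𝕜 := ℝ) (p := p)).mul (hasFDerivAt_snd (𝕜 := ℝ) (p := p)))
    refine this.congr_fderiv ?_
    apply ContinuousLinearMap.ext
    intro v
    simp [rsL]
    ring
  have : rs = fun q : ℝ × ℝ => q.1 * q.1 + q.2 * q.2 := by funext q; simp [rs]; ring
  rw [this]; exact h1

@[simp] lemma rsL_apply (p v : ℝ × ℝ) : rsL p v = 2 * p.1 * v.1 + 2 * p.2 * v.2 := by
  simp [rsL]

lemma comp_rs_hasFDerivAt {u : ℝ → ℝ} {u' : ℝ} (p : ℝ × ℝ) (hu : HasDerivAt u u' (rs p)) :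
    HasFDerivAt (fun q => u (rs q)) (u' • rsL p) p :=
  hu.comp_hasFDerivAt p (hasFDerivAt_rs p)

section OneD
variable {u : ℝ → ℝ}

lemma cd_derivWithin (hu : ContDiffOn ℝ (⊤ : ℕ∞) u (Ico (0:ℝ) 1)) :
    ContDiffOn ℝ (⊤ : ℕ∞) (derivWithin u (Ico (0:ℝ) 1)) (Ico (0:ℝ) 1) :=
  hu.derivWithin (uniqueDiffOn_Ico 0 1) (by simp)

lemma hasDerivAt_of_cd (hu : ContDiffOn ℝ (⊤ : ℕ∞) u (Ico (0:ℝ) 1)) {t : ℝ} (ht : t ∈ Ioo (0:ℝ) 1) :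
    HasDerivAt u (derivWithin u (Ico (0:ℝ) 1) t) t := by
  have hmem : Ico (0:ℝ) 1 ∈ nhds t := by
    refine Filter.mem_of_superset (isOpen_Ioo.mem_nhds ht) Ioo_subset_Ico_self
  have hd : DifferentiableAt ℝ u t :=
    ((hu.differentiableOn (by simp)) t (Ioo_subset_Ico_self ht)).differentiableAt hmem
  have : derivWithin u (Ico (0:ℝ) 1) t = deriv u t := derivWithin_of_mem_nhds hmem
  rw [this]; exact hd.hasDerivAt

lemma hasDerivWithinAt_of_cd (hu : ContDiffOn ℝ (⊤ : ℕ∞) u (Ico (0:ℝ) 1)) {t : ℝ} (ht : t ∈ Ico (0:ℝ) 1) :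
    HasDerivWithinAt u (derivWithin u (Ico (0:ℝ) 1) t) (Ico (0:ℝ) 1) t :=
  ((hu.differentiableOn (by simp)) t ht).hasDerivWithinAt

end OneD

/-- punctured open disk -/
def UU : Set (ℝ × ℝ) := (fun p : ℝ × ℝ => p.1 ^ 2 + p.2 ^ 2) ⁻¹' (Ioo 0 1)

lemma isOpen_UU : IsOpen UU :=
  isOpen_Ioo.preimage (by continuity)

lemma rs_mem_Ioo {p : ℝ × ℝ} (hp : p ∈ UU) : rs p ∈ Ioo (0:ℝ) 1 := hp

lemma px_congr_s17 {g G : ℝ × ℝ → ℝ} {L : ℝ × ℝ →L[ℝ] ℝ} {p : ℝ × ℝ}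
    (he : g =ᶠ[nhds p] G) (hG : HasFDerivAt G L p) : px g p = L (1, 0) := by
  rw [px, he.fderiv_eq, hG.fderiv]

lemma py_congr_s17 {g G : ℝ × ℝ → ℝ} {L : ℝ × ℝ →L[ℝ] ℝ} {p : ℝ × ℝ}
    (he : g =ᶠ[nhds p] G) (hG : HasFDerivAt G L p) : py g p = L (0, 1) := by
  rw [py, he.fderiv_eq, hG.fderiv]

section Layers
variable {f : ℝ × ℝ → ℝ} {h A B C3 : ℝ → ℝ}

lemma layer1 (hrad : ∀ p ∈ {p : ℝ × ℝ | p.1 ^ 2 + p.2 ^ 2 < 1}, f p = h (p.1 ^ 2 + p.2 ^ 2))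
    (hA : ∀ t ∈ Ioo (0:ℝ) 1, HasDerivAt h (A t) t) :
    ∀ p ∈ UU, px f p = 2 * p.1 * A (rs p) ∧ py f p = 2 * p.2 * A (rs p) := by
  intro p hp
  have ht := rs_mem_Ioo hp
  have hD : IsOpen {p : ℝ × ℝ | p.1 ^ 2 + p.2 ^ 2 < 1} := isOpen_lt (by continuity) continuous_const
  have hpD : p ∈ {p : ℝ × ℝ | p.1 ^ 2 + p.2 ^ 2 < 1} := ht.2
  have he : f =ᶠ[nhds p] fun q => h (rs q) :=
    Filter.eventuallyEq_of_mem (hD.mem_nhds hpD) (fun q hq => by simpa [rs] using hrad q hq)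
  have hG : HasFDerivAt (fun q => h (rs q)) ((A (rs p)) • rsL p) p :=
    comp_rs_hasFDerivAt p (hA _ ht)
  constructor
  · rw [px_congr_s17 he hG]; simp; ring
  · rw [py_congr_s17 he hG]; simp; ring

lemma layer2 (hrad : ∀ p ∈ {p : ℝ × ℝ | p.1 ^ 2 + p.2 ^ 2 < 1}, f p = h (p.1 ^ 2 + p.2 ^ 2))
    (hA : ∀ t ∈ Ioo (0:ℝ) 1, HasDerivAt h (A t) t)
    (hB : ∀ t ∈ Ioo (0:ℝ) 1, HasDerivAt A (B t) t) :
    ∀ p ∈ UU, px (px f) p = 2 * A (rs p) + 4 * p.1 ^ 2 * B (rs p) ∧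
      py (px f) p = 4 * p.1 * p.2 * B (rs p) ∧
      py (py f) p = 2 * A (rs p) + 4 * p.2 ^ 2 * B (rs p) := by
  intro p hp
  have ht := rs_mem_Ioo hp
  have hex : px f =ᶠ[nhds p] fun q => 2 * q.1 * A (rs q) :=
    Filter.eventuallyEq_of_mem (isOpen_UU.mem_nhds hp) (fun q hq => (layer1 hrad hA q hq).1)
  have hey : py f =ᶠ[nhds p] fun q => 2 * q.2 * A (rs q) :=
    Filter.eventuallyEq_of_mem (isOpen_UU.mem_nhds hp) (fun q hq => (layer1 hrad hA q hq).2)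
  have hc1 : HasFDerivAt (fun q : ℝ × ℝ => 2 * q.1)
      ((2:ℝ) • ContinuousLinearMap.fst ℝ ℝ ℝ) p := (hasFDerivAt_fst).const_mul 2
  have hc2 : HasFDerivAt (fun q : ℝ × ℝ => 2 * q.2)
      ((2:ℝ) • ContinuousLinearMap.snd ℝ ℝ ℝ) p := (hasFDerivAt_snd).const_mul 2
  have hAc : HasFDerivAt (fun q => A (rs q)) ((B (rs p)) • rsL p) p :=
    comp_rs_hasFDerivAt p (hB _ ht)
  have h1 := hc1.mul hAc
  have h2 := hc2.mul hAc
  refine ⟨?_, ?_, ?_⟩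
  · rw [px_congr_s17 hex h1]; simp; ring
  · rw [py_congr_s17 hex h1]; simp; ring
  · rw [py_congr_s17 hey h2]; simp; ring

lemma hasFDerivAt_congr_fun {g G : ℝ × ℝ → ℝ} {L : ℝ × ℝ →L[ℝ] ℝ} {p : ℝ × ℝ}
    (hG : HasFDerivAt G L p) (hgg : ∀ q, g q = G q) : HasFDerivAt g L p :=
  (funext hgg : g = G) ▸ hG

lemma layer3 (hrad : ∀ p ∈ {p : ℝ × ℝ | p.1 ^ 2 + p.2 ^ 2 < 1}, f p = h (p.1 ^ 2 + p.2 ^ 2))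
    (hA : ∀ t ∈ Ioo (0:ℝ) 1, HasDerivAt h (A t) t)
    (hB : ∀ t ∈ Ioo (0:ℝ) 1, HasDerivAt A (B t) t)
    (hC : ∀ t ∈ Ioo (0:ℝ) 1, HasDerivAt B (C3 t) t) :
    ∀ p ∈ UU, px (px (px f)) p = 12 * p.1 * B (rs p) + 8 * p.1 ^ 3 * C3 (rs p) ∧
      py (px (px f)) p = 4 * p.2 * B (rs p) + 8 * p.1 ^ 2 * p.2 * C3 (rs p) ∧
      py (py (px f)) p = 4 * p.1 * B (rs p) + 8 * p.1 * p.2 ^ 2 * C3 (rs p) ∧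
      py (py (py f)) p = 12 * p.2 * B (rs p) + 8 * p.2 ^ 3 * C3 (rs p) := by
  intro p hp
  have ht := rs_mem_Ioo hp
  have hexx : px (px f) =ᶠ[nhds p] fun q => 2 * A (rs q) + 4 * q.1 ^ 2 * B (rs q) :=
    Filter.eventuallyEq_of_mem (isOpen_UU.mem_nhds hp)
      (fun q hq => (layer2 hrad hA hB q hq).1)
  have heyx : py (px f) =ᶠ[nhds p] fun q => 4 * q.1 * q.2 * B (rs q) :=
    Filter.eventuallyEq_of_mem (isOpen_UU.mem_nhds hp)
      (fun q hq => (layer2 hrad hA hB q hq).2.1)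
  have heyy : py (py f) =ᶠ[nhds p] fun q => 2 * A (rs q) + 4 * q.2 ^ 2 * B (rs q) :=
    Filter.eventuallyEq_of_mem (isOpen_UU.mem_nhds hp)
      (fun q hq => (layer2 hrad hA hB q hq).2.2)
  have hAc : HasFDerivAt (fun q => A (rs q)) ((B (rs p)) • rsL p) p :=
    comp_rs_hasFDerivAt p (hB _ ht)
  have hBc : HasFDerivAt (fun q => B (rs q)) ((C3 (rs p)) • rsL p) p :=
    comp_rs_hasFDerivAt p (hC _ ht)
  have h11 := hasFDerivAt_congr_fun
    ((hAc.const_mul 2).add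
      ((((hasFDerivAt_fst (𝕜 := ℝ) (p := p)).mul hasFDerivAt_fst).const_mul 4).mul hBc))
    (g := fun q : ℝ × ℝ => 2 * A (rs q) + 4 * q.1 ^ 2 * B (rs q)) (fun q => by simp only [Pi.add_apply, Pi.mul_apply]; ring)
  have h22 := hasFDerivAt_congr_fun
    ((hAc.const_mul 2).add
      ((((hasFDerivAt_snd (𝕜 := ℝ) (p := p)).mul hasFDerivAt_snd).const_mul 4).mul hBc))
    (g := fun q : ℝ × ℝ => 2 * A (rs q) + 4 * q.2 ^ 2 * B (rs q)) (fun q => by simp only [Pi.add_apply, Pi.mul_apply]; ring)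
  have h12 := (((hasFDerivAt_fst (𝕜 := ℝ) (p := p)).const_mul 4).mul hasFDerivAt_snd).mul hBc
  refine ⟨?_, ?_, ?_, ?_⟩
  · rw [px_congr_s17 hexx h11]; simp; ring
  · rw [py_congr_s17 hexx h11]; simp; ring
  · rw [py_congr_s17 heyx h12]; simp; ring
  · rw [py_congr_s17 heyy h22]; simp; ring

lemma extract (hrad : ∀ p ∈ {p : ℝ × ℝ | p.1 ^ 2 + p.2 ^ 2 < 1}, f p = h (p.1 ^ 2 + p.2 ^ 2))
    (hA : ∀ t ∈ Ioo (0:ℝ) 1, HasDerivAt h (A t) t)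
    (hB : ∀ t ∈ Ioo (0:ℝ) 1, HasDerivAt A (B t) t)
    (hC : ∀ t ∈ Ioo (0:ℝ) 1, HasDerivAt B (C3 t) t)
    (hpos : ∀ p ∈ {p : ℝ × ℝ | p.1 ^ 2 + p.2 ^ 2 < 1},
      Matrix.PosDef !![px (px f) p, py (px f) p; py (px f) p, py (py f) p])
    (hflat : ∀ p ∈ {p : ℝ × ℝ | p.1 ^ 2 + p.2 ^ 2 < 1},
      Matrix.det
        !![px (px f) p, px (px (px f)) p, py (px (px f)) p;
           py (px f) p, py (px (px f)) p, py (py (px f)) p;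
           py (py f) p, py (py (px f)) p, py (py (py f)) p] = 0) :
    ∀ t ∈ Ioo (0:ℝ) 1, 0 < A t ∧
      B t * (A t * B t - t * B t ^ 2 + A t * t * C3 t) = 0 := by
  intro t ht
  set x := Real.sqrt t with hxdef
  have hx2 : x ^ 2 = t := Real.sq_sqrt ht.1.le
  set p : ℝ × ℝ := (x, 0) with hpdef
  have hrsp : rs p = t := by simp [rs, hpdef, hx2]
  have hpU : p ∈ UU := by simp only [UU, Set.mem_preimage, hpdef]; simpa [hx2] using ht
  have hpD : p ∈ {p : ℝ × ℝ | p.1 ^ 2 + p.2 ^ 2 < 1} := by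
    simpa [hpdef, hx2] using ht.2
  obtain ⟨e2xx, e2yx, e2yy⟩ := layer2 hrad hA hB p hpU
  obtain ⟨e3xxx, e3yxx, e3yyx, e3yyy⟩ := layer3 hrad hA hB hC p hpU
  rw [hrsp] at e2xx e2yx e2yy e3xxx e3yxx e3yyx e3yyy
  have hp1 : p.1 = x := rfl
  have hp2 : p.2 = 0 := rfl
  simp only [hp1, hp2] at e2xx e2yx e2yy e3xxx e3yxx e3yyx e3yyy
  constructor
  · have h1 := (hpos p hpD).dotProduct_mulVec_pos (x := ![0,1]) (by simp [Function.ne_iff])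
    have : 0 < py (py f) p := by
      simpa [Matrix.mulVec, dotProduct, Fin.sum_univ_two] using h1
    rw [e2yy] at this
    nlinarith [this]
  · have hdet := hflat p hpD
    simp only [Matrix.det_fin_three, Matrix.of_apply, Matrix.cons_val', Matrix.cons_val_zero,
      Matrix.cons_val_one, Matrix.head_cons, Matrix.cons_val_two, Matrix.tail_cons,
      Matrix.head_fin_const, Matrix.empty_val', Matrix.cons_val_fin_one] at hdet
    rw [e2xx, e2yx, e2yy, e3xxx, e3yxx, e3yyx, e3yyy] at hdet
    have h64 : 64 * t * (B t * (A t * B t - t * B t ^ 2 + A t * t * C3 t)) = 0 := by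
      linear_combination hdet -
        (64 * A t * B t ^ 2 - 64 * B t ^ 3 * (t + x ^ 2) +
          64 * A t * B t * C3 t * (t + x ^ 2)) * hx2
    have ht0 : (64:ℝ) * t ≠ 0 := by have := ht.1; positivity
    exact (mul_eq_zero.mp h64).resolve_left ht0

lemma rsL_zero : rsL ((0:ℝ), (0:ℝ)) = 0 := by
  apply ContinuousLinearMap.ext
  intro v
  simp

lemma mapsTo_rs_disk : MapsTo rs {p : ℝ × ℝ | p.1 ^ 2 + p.2 ^ 2 < 1} (Ico (0:ℝ) 1) := by
  intro q hq
  exact ⟨by simpa [rs] using add_nonneg (sq_nonneg q.1) (sq_nonneg q.2), hq⟩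

lemma comp_rs_origin {u : ℝ → ℝ} {u' : ℝ} (hu : HasDerivWithinAt u u' (Ico (0:ℝ) 1) 0) :
    HasFDerivAt (fun q => u (rs q)) (0 : ℝ × ℝ →L[ℝ] ℝ) ((0:ℝ), (0:ℝ)) := by
  have hD : IsOpen {p : ℝ × ℝ | p.1 ^ 2 + p.2 ^ 2 < 1} := isOpen_lt (by continuity) continuous_const
  have h0D : ((0:ℝ), (0:ℝ)) ∈ {p : ℝ × ℝ | p.1 ^ 2 + p.2 ^ 2 < 1} := by norm_num
  have hrs0 : rs ((0:ℝ), (0:ℝ)) = 0 := by simp [rs]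
  have hcomp : HasFDerivWithinAt (u ∘ rs) (u' • rsL ((0:ℝ), (0:ℝ)))
      {p : ℝ × ℝ | p.1 ^ 2 + p.2 ^ 2 < 1} ((0:ℝ), (0:ℝ)) := by
    refine HasDerivWithinAt.comp_hasFDerivWithinAt _ (by rw [hrs0]; exact hu)
      ((hasFDerivAt_rs _).hasFDerivWithinAt) mapsTo_rs_disk
  have := hcomp.hasFDerivAt (hD.mem_nhds h0D)
  rw [rsL_zero, smul_zero] at this
  exact this

lemma origin_formula {f : ℝ × ℝ → ℝ} {h A B : ℝ → ℝ}
    (hrad : ∀ p ∈ {p : ℝ × ℝ | p.1 ^ 2 + p.2 ^ 2 < 1}, f p = h (p.1 ^ 2 + p.2 ^ 2))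
    (hA : ∀ t ∈ Ioo (0:ℝ) 1, HasDerivAt h (A t) t)
    (hA0 : HasDerivWithinAt h (A 0) (Ico (0:ℝ) 1) 0)
    (hB0 : HasDerivWithinAt A (B 0) (Ico (0:ℝ) 1) 0) :
    px (px f) ((0:ℝ), (0:ℝ)) = 2 * A 0 := by
  have hD : IsOpen {p : ℝ × ℝ | p.1 ^ 2 + p.2 ^ 2 < 1} := isOpen_lt (by continuity) continuous_const
  have h0D : ((0:ℝ), (0:ℝ)) ∈ {p : ℝ × ℝ | p.1 ^ 2 + p.2 ^ 2 < 1} := by norm_num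
  -- px f = G on the disk
  have hpxf : ∀ q ∈ {p : ℝ × ℝ | p.1 ^ 2 + p.2 ^ 2 < 1}, px f q = 2 * q.1 * A (rs q) := by
    intro q hq
    by_cases hq0 : q.1 ^ 2 + q.2 ^ 2 = 0
    · -- q = 0
      have hq1 : q.1 = 0 := by nlinarith [sq_nonneg q.1, sq_nonneg q.2]
      have hq2 : q.2 = 0 := by nlinarith [sq_nonneg q.1, sq_nonneg q.2]
      have hq' : q = ((0:ℝ), (0:ℝ)) := Prod.ext hq1 hq2
      have he : f =ᶠ[nhds ((0:ℝ),(0:ℝ))] fun q => h (rs q) :=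
        Filter.eventuallyEq_of_mem (hD.mem_nhds h0D) (fun q hq => by simpa [rs] using hrad q hq)
      have hff : HasFDerivAt f 0 ((0:ℝ), (0:ℝ)) :=
        (comp_rs_origin hA0).congr_of_eventuallyEq he
      rw [hq', px, hff.fderiv]
      simp
    · have hqU : q ∈ UU := by
        constructor
        · exact lt_of_le_of_ne (by positivity) (Ne.symm hq0)
        · exact hq
      exact (layer1 hrad hA q hqU).1
  have he2 : px f =ᶠ[nhds ((0:ℝ),(0:ℝ))] fun q => 2 * q.1 * A (rs q) :=
    Filter.eventuallyEq_of_mem (hD.mem_nhds h0D) hpxf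
  have hG : HasFDerivAt (fun q : ℝ × ℝ => 2 * q.1 * A (rs q))
      ((2 * (0:ℝ)) • (0 : ℝ × ℝ →L[ℝ] ℝ) +
        (A (rs ((0:ℝ),(0:ℝ)))) • ((2:ℝ) • ContinuousLinearMap.fst ℝ ℝ ℝ)) ((0:ℝ), (0:ℝ)) := by
    exact ((hasFDerivAt_fst).const_mul 2).mul (comp_rs_origin hB0)
  rw [px_congr_s17 he2 hG]
  simp [rs]
  ring

lemma const_of_deriv_zero {G : ℝ → ℝ} {z t0 : ℝ} (hz : z ≤ t0)
    (hd : ∀ w ∈ Icc z t0, HasDerivAt G 0 w) : G t0 = G z := by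
  have hcont : ContinuousOn G (Icc z t0) :=
    fun w hw => (hd w hw).continuousAt.continuousWithinAt
  exact constant_of_has_deriv_right_zero hcont
    (fun w hw => ((hd w (Ico_subset_Icc_self hw)).hasDerivWithinAt)) t0 ⟨hz, le_refl _⟩

lemma ode_rigidity {A B C3 : ℝ → ℝ}
    (hAd : ∀ t ∈ Ioo (0:ℝ) 1, HasDerivAt A (B t) t)
    (hBd : ∀ t ∈ Ioo (0:ℝ) 1, HasDerivAt B (C3 t) t)
    (hApos : ∀ t ∈ Ioo (0:ℝ) 1, 0 < A t)
    (hAcont : ContinuousWithinAt A (Ico (0:ℝ) 1) 0)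
    (hA0 : 0 < A 0)
    (heq : ∀ t ∈ Ioo (0:ℝ) 1, B t * (A t * B t - t * B t ^ 2 + A t * t * C3 t) = 0) :
    ∀ t ∈ Ioo (0:ℝ) 1, B t = 0 := by
  by_contra hcon
  push_neg at hcon
  obtain ⟨t0, ht0, hbt0⟩ := hcon
  have hA0t0 : 0 < A t0 := hApos t0 ht0
  set K : ℝ := t0 * B t0 / A t0 with hKdef
  have hK0 : K ≠ 0 := div_ne_zero (mul_ne_zero (ne_of_gt ht0.1) hbt0) (ne_of_gt hA0t0)
  set S : Set ℝ := {z : ℝ | z ∈ Ioo (0:ℝ) t0 ∧ B z = 0} with hSdef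
  have hbdd : BddAbove (insert (0:ℝ) S) := by
    refine ⟨t0, ?_⟩
    rintro z (rfl | ⟨hz1, _⟩)
    · exact ht0.1.le
    · exact hz1.2.le
  have hne : (insert (0:ℝ) S).Nonempty := ⟨0, mem_insert _ _⟩
  set α : ℝ := sSup (insert (0:ℝ) S) with hαdef
  have hα0 : 0 ≤ α := le_csSup hbdd (mem_insert _ _)
  -- B is nonzero in a neighborhood of t0
  have hBct0 : ContinuousAt B t0 := (hBd t0 ht0).continuousAt
  obtain ⟨ε, hεpos, hε⟩ : ∃ ε > 0, ∀ z, |z - t0| < ε → B z ≠ 0 := by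
    have := hBct0.eventually_ne hbt0
    rw [Metric.eventually_nhds_iff] at this
    obtain ⟨δ, hδ, hδ2⟩ := this
    exact ⟨δ, hδ, fun z hz => hδ2 (by simpa [Real.dist_eq] using hz)⟩
  have hαt0 : α < t0 := by
    have hle : α ≤ max 0 (t0 - ε) := by
      apply csSup_le hne
      rintro z (rfl | ⟨hz1, hz2⟩)
      · exact le_max_left _ _
      · by_contra hgt
        push_neg at hgt
        have h1 : t0 - ε < z := lt_of_le_of_lt (le_max_right _ _) hgt
        exact hε z (by rw [abs_sub_lt_iff]; constructor <;> [linarith [hz1.2]; linarith]) hz2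
    exact lt_of_le_of_lt hle (max_lt ht0.1 (by linarith))
  have hsub : Ioc α t0 ⊆ Ioo (0:ℝ) 1 :=
    fun z hz => ⟨lt_of_le_of_lt hα0 hz.1, lt_of_le_of_lt hz.2 ht0.2⟩
  have hBne : ∀ z ∈ Ioc α t0, B z ≠ 0 := by
    rintro z ⟨hz1, hz2⟩ hB0
    rcases eq_or_lt_of_le hz2 with rfl | hzlt
    · exact hbt0 hB0
    · exact absurd (le_csSup hbdd (mem_insert_of_mem _
        ⟨⟨lt_of_le_of_lt hα0 hz1, hzlt⟩, hB0⟩)) (not_le.mpr hz1)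
  -- G = z B / A is constant ≡ K on Ioc α t0
  have hGd : ∀ z ∈ Ioc α t0, HasDerivAt (fun w => w * B w / A w) 0 z := by
    intro z hz
    have hzI := hsub hz
    have hAz := hApos z hzI
    have hd := ((hasDerivAt_id z).mul (hBd z hzI)).div (hAd z hzI) (ne_of_gt hAz)
    have hnum : A z * B z - z * B z ^ 2 + A z * z * C3 z = 0 := by
      have := heq z hzI
      rcases mul_eq_zero.mp this with h1 | h1
      · exact absurd h1 (hBne z hz)
      · exact h1
    refine hd.congr_deriv ?_
    simp only [Pi.mul_apply, id]
    field_simp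
    nlinarith [hnum]
  have hGK : ∀ z ∈ Ioc α t0, z * B z / A z = K := by
    intro z hz
    rw [hKdef]
    have := const_of_deriv_zero hz.2 (fun w hw => hGd w ⟨lt_of_lt_of_le hz.1 hw.1, hw.2⟩)
    rw [← this]
  have hBz : ∀ z ∈ Ioc α t0, B z = K * A z / z := by
    intro z hz
    have hz0 : (0:ℝ) < z := lt_of_le_of_lt hα0 hz.1
    have hAz := hApos z (hsub hz)
    have := hGK z hz
    field_simp at this ⊢
    nlinarith [this]
  -- H = A / z^K is constant on Ioc α t0
  set Ac : ℝ := A t0 / t0 ^ K with hAcdef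
  have hAcpos : 0 < Ac := div_pos hA0t0 (Real.rpow_pos_of_pos ht0.1 K)
  have hHd : ∀ z ∈ Ioc α t0, HasDerivAt (fun w => A w / w ^ K) 0 z := by
    intro z hz
    have hz0 : (0:ℝ) < z := lt_of_le_of_lt hα0 hz.1
    have hrp : HasDerivAt (fun w : ℝ => w ^ K) (K * z ^ (K - 1)) z :=
      Real.hasDerivAt_rpow_const (Or.inl (ne_of_gt hz0))
    have hd := (hAd z (hsub hz)).div hrp (ne_of_gt (Real.rpow_pos_of_pos hz0 K))
    have hBzz := hBz z hz
    refine hd.congr_deriv ?_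
    rw [Real.rpow_sub_one (ne_of_gt hz0)] at *
    rw [hBzz]
    field_simp
    ring
  have hHK : ∀ z ∈ Ioc α t0, A z = Ac * z ^ K := by
    intro z hz
    have hz0 : (0:ℝ) < z := lt_of_le_of_lt hα0 hz.1
    have := const_of_deriv_zero hz.2 (fun w hw => hHd w ⟨lt_of_lt_of_le hz.1 hw.1, hw.2⟩)
    rw [hAcdef]
    have hzK : (0:ℝ) < z ^ K := Real.rpow_pos_of_pos hz0 K
    field_simp at this ⊢
    nlinarith [this]
  rcases eq_or_lt_of_le hα0 with hαeq | hαpos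
  · -- α = 0 : A z = Ac z^K on (0, t0], contradiction at 0
    have hAform : ∀ᶠ z in nhdsWithin 0 (Ioo (0:ℝ) 1), A z = Ac * z ^ K := by
      filter_upwards [Filter.inter_mem
        (mem_nhdsWithin_of_mem_nhds (Iio_mem_nhds ht0.1)) self_mem_nhdsWithin] with z hz
      exact hHK z ⟨by rw [← hαeq] at *; exact hz.2.1, hz.1.le⟩
    have hNB : (nhdsWithin (0:ℝ) (Ioo (0:ℝ) 1)).NeBot := by
      rw [← mem_closure_iff_nhdsWithin_neBot, closure_Ioo (by norm_num : (0:ℝ) ≠ 1)]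
      exact ⟨le_refl _, zero_le_one⟩
    have hAt : Filter.Tendsto A (nhdsWithin 0 (Ioo (0:ℝ) 1)) (nhds (A 0)) :=
      hAcont.mono_left (nhdsWithin_mono _ Ioo_subset_Ico_self)
    rcases lt_or_gt_of_ne hK0 with hKneg | hKpos
    · -- K < 0 : A blows up
      have h1 : Filter.Tendsto (fun z : ℝ => Ac * z ^ K) (nhdsWithin 0 (Ioi (0:ℝ)))
          Filter.atTop := by
        have hlog : Filter.Tendsto (fun z : ℝ => K * Real.log z) (nhdsWithin 0 (Ioi (0:ℝ)))
            Filter.atTop :=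
          (Filter.tendsto_const_mul_atTop_of_neg hKneg).mpr
            Real.tendsto_log_nhdsGT_zero
        have hexp : Filter.Tendsto (fun z : ℝ => Real.exp (K * Real.log z))
            (nhdsWithin 0 (Ioi (0:ℝ))) Filter.atTop :=
          Real.tendsto_exp_atTop.comp hlog
        have h2 : Filter.Tendsto (fun z : ℝ => Ac * Real.exp (K * Real.log z))
            (nhdsWithin 0 (Ioi (0:ℝ))) Filter.atTop := hexp.const_mul_atTop hAcpos
        refine Filter.Tendsto.congr' ?_ h2
        filter_upwards [self_mem_nhdsWithin] with z hz
        rw [mul_comm K (Real.log z), ← Real.rpow_def_of_pos hz]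
      have h1' : Filter.Tendsto A (nhdsWithin 0 (Ioo (0:ℝ) 1)) Filter.atTop :=
        Filter.Tendsto.congr' (by filter_upwards [hAform] with z hz; exact hz.symm)
          (h1.mono_left (nhdsWithin_mono _ (fun z hz => hz.1)))
      exact not_tendsto_nhds_of_tendsto_atTop h1' (A 0) hAt
    · -- K > 0 : A → 0, contradicting A 0 > 0
      have h1 : Filter.Tendsto (fun z : ℝ => Ac * z ^ K) (nhds 0) (nhds 0) := by
        have hc : ContinuousAt (fun z : ℝ => z ^ K) 0 :=
          Real.continuousAt_rpow_const 0 K (Or.inr hKpos.le)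
        have := hc.tendsto
        rw [Real.zero_rpow hK0] at this
        simpa using (this.const_mul Ac)
      have h1' : Filter.Tendsto A (nhdsWithin 0 (Ioo (0:ℝ) 1)) (nhds 0) :=
        Filter.Tendsto.congr' (by filter_upwards [hAform] with z hz; exact hz.symm)
          (h1.mono_left nhdsWithin_le_nhds)
      have : A 0 = 0 := tendsto_nhds_unique hAt h1'
      linarith
  · -- α > 0 : B α = 0 and B α ≠ 0
    have hαI : α ∈ Ioo (0:ℝ) 1 := ⟨hαpos, lt_trans hαt0 ht0.2⟩
    have hBcα : ContinuousAt B α := (hBd α hαI).continuousAt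
    -- first : B α = 0
    have hBα : B α = 0 := by
      by_contra hBαne
      obtain ⟨δ, hδpos, hδ⟩ : ∃ δ > 0, ∀ z, |z - α| < δ → B z ≠ 0 := by
        have := hBcα.eventually_ne hBαne
        rw [Metric.eventually_nhds_iff] at this
        obtain ⟨δ, hδ, hδ2⟩ := this
        exact ⟨δ, hδ, fun z hz => hδ2 (by simpa [Real.dist_eq] using hz)⟩
      set δ' : ℝ := min δ α with hδ'def
      have hδ'pos : 0 < δ' := lt_min hδpos hαpos
      have : α ≤ α - δ' := by
        apply csSup_le hne
        rintro z (rfl | ⟨hz1, hz2⟩)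
        · simp only [sub_nonneg]
          exact le_trans (min_le_right _ _) (le_refl _)
        · by_contra hgt
          push_neg at hgt
          have hzle : z ≤ α := le_csSup hbdd (mem_insert_of_mem _ ⟨hz1, hz2⟩)
          exact hδ z (by rw [abs_sub_lt_iff]; constructor <;>
            [linarith [min_le_left δ α]; linarith [min_le_left δ α]]) hz2
      linarith
    -- second : B α ≠ 0 via the limit from the right
    have hBt : Filter.Tendsto B (nhdsWithin α (Ioi α)) (nhds (B α)) :=
      hBcα.continuousWithinAt
    have hBform : ∀ᶠ z in nhdsWithin α (Ioi α), B z = K * (Ac * z ^ K) / z := by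
      filter_upwards [Ioo_mem_nhdsGT_of_mem (⟨le_refl _, hαt0⟩ : α ∈ Ico α t0)] with z hz
      rw [hBz z ⟨hz.1, hz.2.le⟩, hHK z ⟨hz.1, hz.2.le⟩]
    have hlim : Filter.Tendsto (fun z : ℝ => K * (Ac * z ^ K) / z)
        (nhdsWithin α (Ioi α)) (nhds (K * (Ac * α ^ K) / α)) := by
      apply Filter.Tendsto.mono_left _ nhdsWithin_le_nhds
      have hc : ContinuousAt (fun z : ℝ => K * (Ac * z ^ K) / z) α := by
        have h1 : ContinuousAt (fun z : ℝ => z ^ K) α :=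
          Real.continuousAt_rpow_const α K (Or.inl (ne_of_gt hαpos))
        exact (((h1.const_mul Ac).const_mul K).div continuousAt_id (ne_of_gt hαpos))
      exact hc.tendsto
    have hBαval : B α = K * (Ac * α ^ K) / α :=
      tendsto_nhds_unique (hBt.congr' hBform) hlim
    have : B α ≠ 0 := by
      rw [hBαval]
      have := Real.rpow_pos_of_pos hαpos K
      intro hzero
      rcases div_eq_zero_iff.mp hzero with h1 | h1
      · rcases mul_eq_zero.mp h1 with h2 | h2
        · exact hK0 h2
        · nlinarith
      · exact (ne_of_gt hαpos) h1
    exact this hBα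

theorem radially_symmetric_flat_potential (f : ℝ × ℝ → ℝ)
    (hf : ContDiffOn ℝ (⊤ : ℕ∞) f {p : ℝ × ℝ | p.1 ^ 2 + p.2 ^ 2 < 1})
    (hpos : ∀ p ∈ {p : ℝ × ℝ | p.1 ^ 2 + p.2 ^ 2 < 1},
      Matrix.PosDef !![px (px f) p, py (px f) p; py (px f) p, py (py f) p])
    (h : ℝ → ℝ) (hh : ContDiffOn ℝ (⊤ : ℕ∞) h (Set.Ico (0 : ℝ) 1))
    (hrad : ∀ p ∈ {p : ℝ × ℝ | p.1 ^ 2 + p.2 ^ 2 < 1}, f p = h (p.1 ^ 2 + p.2 ^ 2))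
    (hflat : ∀ p ∈ {p : ℝ × ℝ | p.1 ^ 2 + p.2 ^ 2 < 1},
      Matrix.det
        !![px (px f) p, px (px (px f)) p, py (px (px f)) p;
           py (px f) p, py (px (px f)) p, py (py (px f)) p;
           py (py f) p, py (py (px f)) p, py (py (py f)) p] = 0) :
    ∃ C : ℝ, 0 < C ∧ ∃ c : ℝ,
      ∀ p ∈ {p : ℝ × ℝ | p.1 ^ 2 + p.2 ^ 2 < 1},
        f p = C * (p.1 ^ 2 + p.2 ^ 2) + c := by
  set I : Set ℝ := Set.Ico (0:ℝ) 1 with hIdef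
  set A : ℝ → ℝ := derivWithin h I with hAdef
  set B : ℝ → ℝ := derivWithin A I with hBdef
  set C3 : ℝ → ℝ := derivWithin B I with hC3def
  have hhA : ContDiffOn ℝ (⊤ : ℕ∞) A I := cd_derivWithin hh
  have hhB : ContDiffOn ℝ (⊤ : ℕ∞) B I := cd_derivWithin hhA
  have hA : ∀ t ∈ Ioo (0:ℝ) 1, HasDerivAt h (A t) t := fun t ht => hasDerivAt_of_cd hh ht
  have hB : ∀ t ∈ Ioo (0:ℝ) 1, HasDerivAt A (B t) t := fun t ht => hasDerivAt_of_cd hhA ht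
  have hC : ∀ t ∈ Ioo (0:ℝ) 1, HasDerivAt B (C3 t) t := fun t ht => hasDerivAt_of_cd hhB ht
  have h0I : (0:ℝ) ∈ I := ⟨le_refl _, zero_lt_one⟩
  have hA0' : HasDerivWithinAt h (A 0) I 0 := hasDerivWithinAt_of_cd hh h0I
  have hB0' : HasDerivWithinAt A (B 0) I 0 := hasDerivWithinAt_of_cd hhA h0I
  -- extraction
  have hext := extract hrad hA hB hC hpos hflat
  have hApos : ∀ t ∈ Ioo (0:ℝ) 1, 0 < A t := fun t ht => (hext t ht).1
  have heq : ∀ t ∈ Ioo (0:ℝ) 1, B t * (A t * B t - t * B t ^ 2 + A t * t * C3 t) = 0 :=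
    fun t ht => (hext t ht).2
  -- positivity at the origin
  have h0D : ((0:ℝ), (0:ℝ)) ∈ {p : ℝ × ℝ | p.1 ^ 2 + p.2 ^ 2 < 1} := by norm_num
  have hA0pos : 0 < A 0 := by
    have horigin := origin_formula hrad hA hA0' hB0'
    have h1 := (hpos _ h0D).dotProduct_mulVec_pos (x := ![1,0]) (by simp [Function.ne_iff])
    have h2 : 0 < px (px f) ((0:ℝ), (0:ℝ)) := by
      simpa [Matrix.mulVec, dotProduct, Fin.sum_univ_two] using h1
    rw [horigin] at h2
    linarith
  have hAcont : ContinuousWithinAt A I 0 := hhA.continuousOn.continuousWithinAt h0I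
  -- B vanishes on the interior
  have hBzero : ∀ t ∈ Ioo (0:ℝ) 1, B t = 0 := ode_rigidity hB hC hApos hAcont hA0pos heq
  -- B 0 = 0 by continuity
  have hNB : (nhdsWithin (0:ℝ) (Ioo (0:ℝ) 1)).NeBot := by
    rw [← mem_closure_iff_nhdsWithin_neBot, closure_Ioo (by norm_num : (0:ℝ) ≠ 1)]
    exact ⟨le_refl _, zero_le_one⟩
  have hB00 : B 0 = 0 := by
    have hBt : Filter.Tendsto B (nhdsWithin 0 (Ioo (0:ℝ) 1)) (nhds (B 0)) :=
      (hhB.continuousOn.continuousWithinAt h0I).mono_left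
        (nhdsWithin_mono _ Ioo_subset_Ico_self)
    have hB0t : Filter.Tendsto B (nhdsWithin 0 (Ioo (0:ℝ) 1)) (nhds 0) := by
      refine Filter.Tendsto.congr' ?_ tendsto_const_nhds
      filter_upwards [self_mem_nhdsWithin] with z hz
      exact (hBzero z hz).symm
    exact tendsto_nhds_unique hBt hB0t
  -- A is constant, equal to A 0
  have hIco_mem : I ∈ nhdsWithin (0:ℝ) (Ici (0:ℝ)) := by
    rw [hIdef]
    rw [show Ico (0:ℝ) 1 = Ici (0:ℝ) ∩ Iio 1 from (Ici_inter_Iio).symm]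
    exact Filter.inter_mem self_mem_nhdsWithin
      (mem_nhdsWithin_of_mem_nhds (Iio_mem_nhds one_pos))
  have hderA : ∀ z ∈ I, HasDerivWithinAt A 0 (Ici z) z := by
    intro z hz
    rcases eq_or_lt_of_le hz.1 with rfl | hzpos
    · rw [hB00] at hB0'
      exact hB0'.mono_of_mem_nhdsWithin hIco_mem
    · have := (hB z ⟨hzpos, hz.2⟩)
      rw [hBzero z ⟨hzpos, hz.2⟩] at this
      exact this.hasDerivWithinAt
  have hIccI : ∀ t ∈ I, Icc (0:ℝ) t ⊆ I :=
    fun t ht z hz => ⟨hz.1, lt_of_le_of_lt hz.2 ht.2⟩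
  have hAconst : ∀ t ∈ I, A t = A 0 := by
    intro t ht
    exact constant_of_has_deriv_right_zero
      (hhA.continuousOn.mono (hIccI t ht))
      (fun z hz => (hderA z ⟨hz.1, lt_trans hz.2 ht.2⟩))
      t ⟨ht.1, le_refl _⟩
  -- h is affine
  have hderh : ∀ z ∈ I, HasDerivWithinAt h (A z) (Ici z) z := by
    intro z hz
    rcases eq_or_lt_of_le hz.1 with rfl | hzpos
    · exact hA0'.mono_of_mem_nhdsWithin hIco_mem
    · exact (hA z ⟨hzpos, hz.2⟩).hasDerivWithinAt
  refine ⟨A 0, hA0pos, h 0, ?_⟩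
  intro p hp
  have hsI : p.1 ^ 2 + p.2 ^ 2 ∈ I := ⟨by positivity, hp⟩
  have haffine : ∀ t ∈ I, h t = A 0 * t + h 0 := by
    intro t ht
    have key : ∀ z ∈ Icc (0:ℝ) t, (fun w => h w - A 0 * w) z = (fun w => h w - A 0 * w) 0 := by
      apply constant_of_has_deriv_right_zero
      · exact ((hh.continuousOn.mono (hIccI t ht)).sub
          ((continuous_const.mul continuous_id).continuousOn))
      · intro z hz
        have hzI : z ∈ I := ⟨hz.1, lt_trans hz.2 ht.2⟩
        have h1 := (hderh z hzI).sub
          (((hasDerivAt_id z).const_mul (A 0)).hasDerivWithinAt)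
        rw [hAconst z hzI] at h1
        exact h1.congr_deriv (by simp)
    have := key t ⟨ht.1, le_refl _⟩
    simp only at this
    linarith
  rw [hrad p hp, haffine _ hsI]
end Layers
end
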